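/- For the shifted shape poset P = P₂(α) of a strict partition α with ℓ(α) ≥ 2, the map c(i,j) = j - i for i < j, c(i,i) = 0 for odd i, c(i,i) = 0' for even i, is a proper coloring: incomparable elements get distinct colors and covering pairs get distinct colors. -/

import Mathlib

/-- The `d`-complete coloring of a shifted shape: `c(i,j) = j - i` for `i < j`
(color `Sum.inl (j-i)`), and on the diagonal color `0` for odd `i`, `0'` for
even `i` (encoded `Sum.inr true` / `Sum.inr false`). -/
def shiftedColor (p : ℕ × ℕ) : ℕ ⊕ Bool :=
  if p.1 < p.2 then Sum.inl (p.2 - p.1) else Sum.inr (decide (p.1 % 2 = 1))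

theorem shiftedColor_ne_of_lt_of_lt {p q : ℕ × ℕ} (hq : q.1 ≤ q.2) (h₁ : p.1 < q.1)
    (h₂ : q.2 < p.2) : shiftedColor p ≠ shiftedColor q := by
  unfold shiftedColor
  split_ifs <;> grind

-- If neither cell lies strictly above the diagonal, the parity of the row separates them.
theorem shiftedColor_succ_fst_ne (i j : ℕ) : shiftedColor (i + 1, j) ≠ shiftedColor (i, j) := by
  unfold shiftedColor
  split_ifs <;> grind

theorem shiftedColor_succ_snd_ne {i j : ℕ} (h : i ≤ j) :
    shiftedColor (i, j + 1) ≠ shiftedColor (i, j) := by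
  unfold shiftedColor
  split_ifs <;> grind

theorem shifted_coloring_proper_general (r : ℕ) (lam : ℕ → ℕ)
    (S : Set (ℕ × ℕ))
    (hS : S = {p : ℕ × ℕ | 1 ≤ p.1 ∧ p.1 ≤ r ∧ p.1 ≤ p.2 ∧ p.2 ≤ lam p.1 + p.1 - 1}) :
    (∀ p ∈ S, ∀ q ∈ S,
      ((p.1 < q.1 ∧ q.2 < p.2) ∨ (q.1 < p.1 ∧ p.2 < q.2)) →
        shiftedColor p ≠ shiftedColor q) ∧
    (∀ p ∈ S, ∀ q ∈ S,
      ((q.1 + 1 = p.1 ∧ q.2 = p.2) ∨ (q.1 = p.1 ∧ q.2 + 1 = p.2)) →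
        shiftedColor p ≠ shiftedColor q) := by
  subst hS
  refine ⟨?_, ?_⟩
  · rintro p ⟨-, -, hp, -⟩ q ⟨-, -, hq, -⟩ (⟨h₁, h₂⟩ | ⟨h₁, h₂⟩)
    · exact shiftedColor_ne_of_lt_of_lt hq h₁ h₂
    · exact (shiftedColor_ne_of_lt_of_lt hp h₁ h₂).symm
  · rintro ⟨a, b⟩ - ⟨c, d⟩ ⟨-, -, hq, -⟩ (⟨rfl, rfl⟩ | ⟨rfl, rfl⟩)
    · exact shiftedColor_succ_fst_ne c d
    · exact shiftedColor_succ_snd_ne hq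

/-- For the shifted shape poset `P₂(α)` of a strict partition `α` with `ℓ(α) ≥ 2`,
the coloring `c(i,j) = j-i` (`i < j`), `0` resp. `0'` on odd resp. even diagonal
cells, is proper: incomparable elements and covering pairs get distinct colors. -/
theorem shifted_coloring_proper (r : ℕ) (lam : ℕ → ℕ) (hr : 2 ≤ r)
    (hstrict : ∀ i, 1 ≤ i → i < r → lam (i + 1) < lam i)
    (hpos : 0 < lam r)
    (S : Set (ℕ × ℕ))
    (hS : S = {p : ℕ × ℕ | 1 ≤ p.1 ∧ p.1 ≤ r ∧ p.1 ≤ p.2 ∧ p.2 ≤ lam p.1 + p.1 - 1}) :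
    (∀ p ∈ S, ∀ q ∈ S,
      ((p.1 < q.1 ∧ q.2 < p.2) ∨ (q.1 < p.1 ∧ p.2 < q.2)) →
        shiftedColor p ≠ shiftedColor q) ∧
    (∀ p ∈ S, ∀ q ∈ S,
      ((q.1 + 1 = p.1 ∧ q.2 = p.2) ∨ (q.1 = p.1 ∧ q.2 + 1 = p.2)) →
        shiftedColor p ≠ shiftedColor q) :=
  shifted_coloring_proper_general r lam S hS
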